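/- arXiv:2209.03931 — 3 statements merged into one kernel-verified Lean document; each statement's English description precedes it below -/
import Mathlib

section
/- If G is a 2-edge-connected, claw-free, diamond-free cubic multigraph of order n containing exactly one pair of vertices {u,v} joined by two parallel edges (and no other parallel edges or loops), then γ_P(G) ≤ (n−2)/6. -/
namespace PaperPD

open SimpleGraph

variable {V : Type} {W : Type}

/-- Observation process for power domination on a simple graph. -/
inductive Observed (G : SimpleGraph V) (S : Set V) : V → Prop
  | mem : ∀ v ∈ S, Observed G S v
  | dom : ∀ u v, u ∈ S → G.Adj u v → Observed G S v
  | prop : ∀ u v, Observed G S u → G.Adj u v →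
      (∀ w, G.Adj u w → w ≠ v → Observed G S w) → Observed G S v

/-- `S` is a power dominating set of `G`. -/
def IsPDS (G : SimpleGraph V) (S : Set V) : Prop := ∀ v, Observed G S v

/-- Power domination number. -/
noncomputable def pdNum (G : SimpleGraph V) [Fintype V] : ℕ :=
  sInf {n | ∃ S : Finset V, S.card = n ∧ IsPDS G ↑S}

/-- Zero forcing process. -/
inductive Forced (G : SimpleGraph V) (S : Set V) : V → Prop
  | mem : ∀ v ∈ S, Forced G S v
  | prop : ∀ u v, Forced G S u → G.Adj u v →
      (∀ w, G.Adj u w → w ≠ v → Forced G S w) → Forced G S v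

/-- Zero forcing number. -/
noncomputable def zNum (G : SimpleGraph V) [Fintype V] : ℕ :=
  sInf {n | ∃ S : Finset V, S.card = n ∧ ∀ v, Forced G S v}

/-- Domination number. -/
noncomputable def domNum (G : SimpleGraph V) [Fintype V] : ℕ :=
  sInf {n | ∃ S : Finset V, S.card = n ∧ ∀ v, ∃ u ∈ S, v = u ∨ G.Adj u v}

/-- No induced `K_{1,3}`. -/
def ClawFree (G : SimpleGraph V) : Prop :=
  ∀ x a b c : V, a ≠ b → a ≠ c → b ≠ c →
    G.Adj x a → G.Adj x b → G.Adj x c →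
    ¬ G.Adj a b → ¬ G.Adj a c → ¬ G.Adj b c → False

/-- No induced `K₄` minus an edge. -/
def DiamondFree (G : SimpleGraph V) : Prop :=
  ∀ a b c d : V, a ≠ b → a ≠ c → a ≠ d → b ≠ c → b ≠ d → c ≠ d →
    G.Adj a b → G.Adj a c → G.Adj b c → G.Adj b d → G.Adj c d →
    ¬ G.Adj a d → False

/-- A leaf: a vertex with exactly one neighbor. -/
def IsLeaf (G : SimpleGraph V) (v : V) : Prop := ∃! u, G.Adj v u

/-- A strong support vertex: adjacent to at least two leaves. -/
def IsStrongSupport (G : SimpleGraph V) (x : V) : Prop :=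
  ∃ a b, a ≠ b ∧ G.Adj x a ∧ G.Adj x b ∧ IsLeaf G a ∧ IsLeaf G b

/-- Number of strong support vertices. -/
noncomputable def ssCount (G : SimpleGraph V) : ℕ :=
  Nat.card {v // IsStrongSupport G v}

/-- Connected with no bridges. -/
def TwoEdgeConnected (G : SimpleGraph V) : Prop :=
  G.Connected ∧ ∀ e, ¬ G.IsBridge e

/-- A loopless multigraph, given by symmetric edge multiplicities. -/
structure Multigraph (W : Type) where
  mult : W → W → ℕ
  symm : ∀ u v, mult u v = mult v u
  loopless : ∀ v, mult v v = 0

/-- Underlying simple graph of a multigraph. -/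
def Multigraph.toSimple (M : Multigraph W) : SimpleGraph W where
  Adj u v := u ≠ v ∧ 0 < M.mult u v
  symm := by constructor; intro u v h; exact ⟨h.1.symm, by rw [M.symm]; exact h.2⟩
  loopless := by constructor; intro v h; exact h.1 rfl

/-- Degree of a vertex in a multigraph (counting multiplicities). -/
def Multigraph.degree [Fintype W] (M : Multigraph W) (v : W) : ℕ :=
  ∑ u, M.mult v u

/-- Bridgeless multigraph: no single edge is a cut edge (a parallel edge
is never a bridge). -/
def Multigraph.Bridgeless (M : Multigraph W) : Prop :=
  ∀ u v, M.mult u v = 1 → ¬ M.toSimple.IsBridge s(u, v)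

/-- A 2-factor of a multigraph, given by sub-multiplicities. -/
def Multigraph.IsTwoFactor [Fintype W] (M : Multigraph W) (f : W → W → ℕ) : Prop :=
  (∀ u v, f u v ≤ M.mult u v) ∧ (∀ u v, f u v = f v u) ∧ (∀ v, ∑ u, f v u = 2)

/-- Observation process for power domination on a multigraph: propagation
only happens along single edges. -/
inductive MObserved (M : Multigraph W) (S : Set W) : W → Prop
  | mem : ∀ v ∈ S, MObserved M S v
  | dom : ∀ u v, u ∈ S → 0 < M.mult u v → MObserved M S v
  | prop : ∀ u v, MObserved M S u → M.mult u v = 1 →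
      (∀ w, 0 < M.mult u w → w ≠ v → MObserved M S w) → MObserved M S v

/-- Power domination number of a multigraph. -/
noncomputable def mpdNum (M : Multigraph W) [Fintype W] : ℕ :=
  sInf {n | ∃ S : Finset W, S.card = n ∧ ∀ v, MObserved M ↑S v}

/-!
Every vertex other than `u`, `v` is joined to three distinct neighbours by single edges and, by
claw-freeness, lies on a triangle; diamond-freeness, connectivity and bridgelessness make this
triangle unique. So the `n - 2` such vertices split into `k` disjoint triangles, every vertex
having exactly one neighbour outside its triangle, and the handshake lemma makes `n = 3k + 2`,
hence `k`, even.

Let `x`, `y` be the third neighbours of `u`, `v`; they lie in different triangles. Seeding `x`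
observes its triangle. While some triangle is unobserved, connectivity and bridgelessness give an
edge `pq` from an observed triangle to an unobserved one. Then `p` and `q` are observed, so the
triangle of `q` becomes observed as soon as one more of its vertices `a` is. Some such `a` has its
outside neighbour `e` different from `u`, `v`; if the triangle of `e` is unobserved, seeding `e`
observes two triangles at once. Hence `1 + (k - 2) / 2 = (n - 2) / 6` seeds suffice, after which
`u` and `v` are observed from `x` and `y`.
-/

section Development

open scoped Classical
open Finset

theorem _root_.SimpleGraph.Reachable.mem_of_forall_adj_mem {V : Type*} {G : SimpleGraph V}
    {O : Set V} {a b : V} (h : G.Reachable a b) (hO : ∀ c ∈ O, ∀ d, G.Adj c d → d ∈ O)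
    (ha : a ∈ O) : b ∈ O := by
  by_contra hb
  obtain ⟨p⟩ := h
  obtain ⟨d, -, hd, hd'⟩ := p.exists_boundary_dart O ha hb
  exact hd' (hO _ hd _ d.adj)

theorem _root_.Finset.exists_eq_triple_of_card_eq_three {α : Type*} [DecidableEq α]
    {s : Finset α} {a b : α} (hs : s.card = 3) (ha : a ∈ s) (hb : b ∈ s) (hab : a ≠ b) :
    ∃ c, c ≠ a ∧ c ≠ b ∧ s = {a, b, c} := by
  have hsub : {a, b} ⊆ s := by simp [insert_subset_iff, ha, hb]
  obtain ⟨c, hc⟩ := card_eq_one.mp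
    (by rw [card_sdiff_of_subset hsub, hs, card_pair hab] :
      (s \ {a, b}).card = 1)
  have hcs : c ∈ s \ {a, b} := hc ▸ mem_singleton_self c
  simp only [mem_sdiff, mem_insert, mem_singleton, not_or] at hcs
  refine ⟨c, hcs.2.1, hcs.2.2, ?_⟩
  rw [← union_sdiff_of_subset hsub, hc, insert_union, singleton_union]

namespace Multigraph

variable (M : Multigraph W)

theorem toSimple_adj_iff {a b : W} : M.toSimple.Adj a b ↔ 0 < M.mult a b :=
  ⟨And.right, fun h => ⟨fun hab => by simp [hab, M.loopless] at h, h⟩⟩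

theorem Bridgeless.mem_of_forall_adj_mem {M : Multigraph W} (hM : M.Bridgeless) {a b : W}
    (hab : M.mult a b = 1) {O : Set W} (ha : a ∈ O)
    (hO : ∀ c ∈ O, ∀ d, M.toSimple.Adj c d → s(c, d) ≠ s(a, b) → d ∈ O) :
    b ∈ O := by
  have hreach : (M.toSimple.deleteEdges {s(a, b)}).Reachable a b := by
    simpa [SimpleGraph.isBridge_iff] using hM a b hab
  refine hreach.mem_of_forall_adj_mem (fun c hc d hcd => ?_) ha
  rw [SimpleGraph.deleteEdges_adj] at hcd
  exact hO c hc d hcd.1 hcd.2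

variable [Fintype W]

theorem eq_or_eq_of_degree_eq {a b c z : W} (hbc : b ≠ c)
    (h : M.degree a = M.mult a b + M.mult a c) (hz : M.toSimple.Adj a z) : z = b ∨ z = c := by
  by_contra! hne
  have hle : ∑ y ∈ {z, b, c}, M.mult a y ≤ M.degree a :=
    sum_le_sum_of_subset (subset_univ _)
  rw [sum_insert (by simp [hne.1, hne.2]), sum_pair hbc] at hle
  have := (M.toSimple_adj_iff).mp hz
  omega

theorem exists_mult_eq_one {a b : W} (h : M.degree a = M.mult a b + 1) :
    ∃ c, c ≠ b ∧ M.mult a c = 1 := by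
  have hsum : ∑ z ∈ univ.erase b, M.mult a z = 1 := by
    have := add_sum_erase univ (M.mult a) (mem_univ b)
    unfold degree at h
    omega
  obtain ⟨c, hc, hc0⟩ := exists_ne_zero_of_sum_ne_zero (hsum ▸ one_ne_zero)
  refine ⟨c, ne_of_mem_erase hc, le_antisymm ?_ (Nat.pos_of_ne_zero hc0)⟩
  exact hsum ▸ single_le_sum (fun _ _ => Nat.zero_le _) hc

theorem even_sum_degree : Even (∑ a, M.degree a) := by
  rw [← ZMod.natCast_eq_zero_iff_even]
  push_cast [degree]
  rw [← Fintype.sum_prod_type' (fun a b => (M.mult a b : ZMod 2))]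
  refine sum_ninvolution Prod.swap (fun p => ?_) (fun p hp hswap => hp ?_)
    (fun _ => mem_univ _) Prod.swap_swap
  · rw [Prod.fst_swap, Prod.snd_swap, M.symm p.2 p.1, ← two_mul]
    exact mul_eq_zero_of_left rfl _
  · obtain ⟨a, b⟩ := p
    obtain ⟨hba, -⟩ := Prod.mk.inj hswap
    simp only at hba ⊢
    rw [hba, M.loopless, Nat.cast_zero]

theorem card_neighborFinset_eq_degree [DecidableRel M.toSimple.Adj] {a : W}
    (h : ∀ z, M.mult a z ≤ 1) : (M.toSimple.neighborFinset a).card = M.degree a := by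
  rw [SimpleGraph.neighborFinset_eq_filter, card_filter, degree]
  refine sum_congr rfl fun z _ => ?_
  have := h z
  by_cases hz : 0 < M.mult a z <;> simp [M.toSimple_adj_iff, hz] <;> omega

end Multigraph

section Triangles

variable [Fintype V] {G : SimpleGraph V}

-- Under `CubicOneDoubleEdge M u v` this is the unique triangle through `w` when `w ≠ u, v`.
noncomputable def triangleAt (G : SimpleGraph V) (w : V) : Finset V :=
  {z | z = w ∨ ∃ c, G.Adj w z ∧ G.Adj w c ∧ G.Adj z c}

theorem mem_triangleAt {w z : V} :
    z ∈ triangleAt G w ↔ z = w ∨ ∃ c, G.Adj w z ∧ G.Adj w c ∧ G.Adj z c := by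
  simp [triangleAt]

theorem mem_triangleAt_self (w : V) : w ∈ triangleAt G w :=
  mem_triangleAt.mpr (Or.inl rfl)

theorem adj_of_mem_triangleAt {w z : V} (hz : z ∈ triangleAt G w) (hzw : z ≠ w) :
    G.Adj w z := by
  obtain rfl | ⟨_, h, -⟩ := mem_triangleAt.mp hz
  exacts [absurd rfl hzw, h]

end Triangles

section Setting

variable [Fintype W]

structure CubicOneDoubleEdge (M : Multigraph W) (u v : W) : Prop where
  degree_eq_three : ∀ w, M.degree w = 3
  clawFree : ClawFree M.toSimple
  diamondFree : DiamondFree M.toSimple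
  connected : M.toSimple.Connected
  bridgeless : M.Bridgeless
  mult_eq_two : M.mult u v = 2
  mult_le_one : ∀ a b, a ≠ u → a ≠ v → M.mult a b ≤ 1

noncomputable def triangles (M : Multigraph W) (u v : W) : Finset (Finset W) :=
  ({u, v}ᶜ : Finset W).image (triangleAt M.toSimple)

def ObservesOutside (M : Multigraph W) (u v : W) (S : Set W) (U : Finset (Finset W)) : Prop :=
  ∀ w, w ≠ u → w ≠ v → triangleAt M.toSimple w ∉ U → MObserved M S w

variable {M : Multigraph W} {u v : W}

theorem mObserved_of_mem_triangleAt {S : Set W} {w z : W} (hw : w ∈ S)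
    (hz : z ∈ triangleAt M.toSimple w) : MObserved M S z := by
  by_cases hzw : z = w
  · exact hzw ▸ MObserved.mem w hw
  · exact MObserved.dom w z hw (adj_of_mem_triangleAt hz hzw).2

theorem ObservesOutside.erase {S : Set W} {U : Finset (Finset W)}
    (hS : ObservesOutside M u v S U) {t : Finset W} (ht : ∀ z ∈ t, MObserved M S z) :
    ObservesOutside M u v S (U.erase t) := by
  intro w hwu hwv hwU
  by_cases h : triangleAt M.toSimple w = t
  · exact ht w (h ▸ mem_triangleAt_self w)
  · exact hS w hwu hwv fun hU => hwU (mem_erase.mpr ⟨h, hU⟩)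

namespace CubicOneDoubleEdge

theorem symm (hM : CubicOneDoubleEdge M u v) : CubicOneDoubleEdge M v u :=
  { hM with
    mult_eq_two := M.symm v u ▸ hM.mult_eq_two
    mult_le_one := fun a b hav hau => hM.mult_le_one a b hau hav }

theorem ne (hM : CubicOneDoubleEdge M u v) : u ≠ v := by
  rintro rfl
  simpa [M.loopless] using hM.mult_eq_two

theorem mult_eq_one (hM : CubicOneDoubleEdge M u v) {w z : W} (hwu : w ≠ u) (hwv : w ≠ v)
    (h : M.toSimple.Adj w z) : M.mult w z = 1 :=
  le_antisymm (hM.mult_le_one w z hwu hwv) h.2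

theorem exists_mult_eq_one (hM : CubicOneDoubleEdge M u v) : ∃ x, M.mult u x = 1 :=
  (M.exists_mult_eq_one (b := v) (by rw [hM.degree_eq_three, hM.mult_eq_two])).imp
    fun _ h => h.2

theorem eq_or_eq_of_adj (hM : CubicOneDoubleEdge M u v) {a : W} (ha : M.toSimple.Adj u a)
    (hav : a ≠ v) : ∀ z, M.toSimple.Adj u z → z = v ∨ z = a := fun _ =>
  M.eq_or_eq_of_degree_eq (Ne.symm hav) (by
    rw [hM.degree_eq_three, hM.mult_eq_two, M.symm, hM.mult_eq_one ha.ne.symm hav ha.symm])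

theorem card_neighborFinset (hM : CubicOneDoubleEdge M u v) {w : W} (hwu : w ≠ u)
    (hwv : w ≠ v) : (M.toSimple.neighborFinset w).card = 3 := by
  rw [M.card_neighborFinset_eq_degree (hM.mult_le_one w · hwu hwv), hM.degree_eq_three]

theorem exists_adj_of_adj_of_adj (hM : CubicOneDoubleEdge M u v) {w a b : W} (hwu : w ≠ u)
    (hwv : w ≠ v) (ha : M.toSimple.Adj w a) (hb : M.toSimple.Adj w b) (hab : a ≠ b) :
    ∃ c, c ≠ a ∧ c ≠ b ∧ M.toSimple.Adj w c ∧
      ∀ z, M.toSimple.Adj w z → z = a ∨ z = b ∨ z = c := by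
  obtain ⟨c, hca, hcb, hN⟩ := exists_eq_triple_of_card_eq_three (hM.card_neighborFinset hwu hwv)
    ((M.toSimple.mem_neighborFinset _ _).mpr ha) ((M.toSimple.mem_neighborFinset _ _).mpr hb) hab
  have hmem : ∀ z, M.toSimple.Adj w z ↔ z = a ∨ z = b ∨ z = c := fun z => by
    rw [← M.toSimple.mem_neighborFinset, hN]
    simp
  exact ⟨c, hca, hcb, (hmem c).mpr (by simp), fun z => (hmem z).mp⟩

theorem eq_or_eq_or_eq_of_adj (hM : CubicOneDoubleEdge M u v) {w a b c : W} (hwu : w ≠ u)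
    (hwv : w ≠ v) (ha : M.toSimple.Adj w a) (hb : M.toSimple.Adj w b) (hc : M.toSimple.Adj w c)
    (hab : a ≠ b) (hac : a ≠ c) (hbc : b ≠ c) :
    ∀ z, M.toSimple.Adj w z → z = a ∨ z = b ∨ z = c := by
  obtain ⟨d, -, -, -, hN⟩ := hM.exists_adj_of_adj_of_adj hwu hwv ha hb hab
  obtain h | h | rfl := hN c hc
  exacts [absurd h.symm hac, absurd h.symm hbc, hN]

theorem not_adj_and_adj (hM : CubicOneDoubleEdge M u v) {w : W} :
    ¬ (M.toSimple.Adj u w ∧ M.toSimple.Adj v w) := by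
  rintro ⟨hu, hv⟩
  have hwu : w ≠ u := hu.ne.symm
  have hwv : w ≠ v := hv.ne.symm
  have hNu := hM.eq_or_eq_of_adj hu hwv
  have hNv := hM.symm.eq_or_eq_of_adj hv hwu
  obtain ⟨c, hcu, hcv, hwc, hNw⟩ := hM.exists_adj_of_adj_of_adj hwu hwv hu.symm hv.symm hM.ne
  -- otherwise `wc` would be the only edge leaving `{w, u, v}`
  have hc : c ∈ ({w, u, v} : Set W) := by
    refine hM.bridgeless.mem_of_forall_adj_mem (hM.mult_eq_one hwu hwv hwc) (by simp)
      fun a ha d had hne => ?_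
    simp only [Set.mem_insert_iff, Set.mem_singleton_iff] at ha ⊢
    obtain rfl | rfl | rfl := ha
    · obtain rfl | rfl | rfl := hNw d had
      exacts [Or.inr (Or.inl rfl), Or.inr (Or.inr rfl), absurd rfl hne]
    · obtain rfl | rfl := hNu d had <;> simp
    · obtain rfl | rfl := hNv d had <;> simp
  simp only [Set.mem_insert_iff, Set.mem_singleton_iff] at hc
  obtain rfl | rfl | rfl := hc
  exacts [hwc.ne rfl, hcu rfl, hcv rfl]

theorem ne_left_of_triangle (hM : CubicOneDoubleEdge M u v) {w p q : W} (hwv : w ≠ v)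
    (hp : M.toSimple.Adj w p) (hq : M.toSimple.Adj w q) (hpq : M.toSimple.Adj p q) : p ≠ u := by
  rintro rfl
  obtain rfl | rfl := hM.eq_or_eq_of_adj hp.symm hwv q hpq
  exacts [hM.not_adj_and_adj ⟨hp.symm, hq.symm⟩, hq.ne rfl]

theorem ne_of_triangle (hM : CubicOneDoubleEdge M u v) {w p q : W} (hwu : w ≠ u) (hwv : w ≠ v)
    (hp : M.toSimple.Adj w p) (hq : M.toSimple.Adj w q) (hpq : M.toSimple.Adj p q) :
    p ≠ u ∧ p ≠ v :=
  ⟨hM.ne_left_of_triangle hwv hp hq hpq, hM.symm.ne_left_of_triangle hwu hp hq hpq⟩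

theorem exists_triangle (hM : CubicOneDoubleEdge M u v) {w : W} (hwu : w ≠ u) (hwv : w ≠ v) :
    ∃ p q, M.toSimple.Adj w p ∧ M.toSimple.Adj w q ∧ M.toSimple.Adj p q := by
  obtain ⟨a, b, c, hab, hac, hbc, hN⟩ := card_eq_three.mp (hM.card_neighborFinset hwu hwv)
  have hadj : ∀ z ∈ ({a, b, c} : Finset W), M.toSimple.Adj w z := fun z hz =>
    (M.toSimple.mem_neighborFinset _ _).mp (hN ▸ hz)
  have ha := hadj a (by simp)
  have hb := hadj b (by simp)
  have hc := hadj c (by simp)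
  by_contra! h
  exact hM.clawFree w a b c hab hac hbc ha hb hc (h a b ha hb) (h a c ha hc) (h b c hb hc)

/-- Otherwise the two triangles span a diamond, or a `K₄` which would be a whole component
avoiding `u`. -/
theorem eq_of_triangle_of_triangle (hM : CubicOneDoubleEdge M u v) {w p q r : W} (hwu : w ≠ u)
    (hwv : w ≠ v) (hp : M.toSimple.Adj w p) (hq : M.toSimple.Adj w q) (hr : M.toSimple.Adj w r)
    (hpq : M.toSimple.Adj p q) (hpr : M.toSimple.Adj p r) : q = r := by
  by_contra hqr
  by_cases hqr' : M.toSimple.Adj q r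
  · obtain ⟨hpu, hpv⟩ := hM.ne_of_triangle hwu hwv hp hq hpq
    obtain ⟨hqu, hqv⟩ := hM.ne_of_triangle hwu hwv hq hp hpq.symm
    obtain ⟨hru, hrv⟩ := hM.ne_of_triangle hwu hwv hr hp hpr.symm
    have hNw := hM.eq_or_eq_or_eq_of_adj hwu hwv hp hq hr hpq.ne hpr.ne hqr
    have hNp := hM.eq_or_eq_or_eq_of_adj hpu hpv hp.symm hpq hpr hq.ne hr.ne hqr
    have hNq := hM.eq_or_eq_or_eq_of_adj hqu hqv hq.symm hpq.symm hqr' hp.ne hr.ne hpr.ne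
    have hNr := hM.eq_or_eq_or_eq_of_adj hru hrv hr.symm hpr.symm hqr'.symm hp.ne hq.ne hpq.ne
    have hu : u ∈ ({w, p, q, r} : Set W) := by
      refine (hM.connected.preconnected w u).mem_of_forall_adj_mem (fun a ha d had => ?_) (by simp)
      simp only [Set.mem_insert_iff, Set.mem_singleton_iff] at ha ⊢
      obtain rfl | rfl | rfl | rfl := ha
      · have := hNw d had; tauto
      · have := hNp d had; tauto
      · have := hNq d had; tauto
      · have := hNr d had; tauto
    simp only [Set.mem_insert_iff, Set.mem_singleton_iff] at hu
    obtain rfl | rfl | rfl | rfl := hu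
    exacts [hwu rfl, hpu rfl, hqu rfl, hru rfl]
  · exact hM.diamondFree q w p r hq.ne.symm hpq.ne.symm hqr hp.ne hr.ne hpr.ne hq.symm hpq.symm hp
      hr hpr hqr'

theorem triangleAt_eq (hM : CubicOneDoubleEdge M u v) {w p q : W} (hwu : w ≠ u) (hwv : w ≠ v)
    (hp : M.toSimple.Adj w p) (hq : M.toSimple.Adj w q) (hpq : M.toSimple.Adj p q) :
    triangleAt M.toSimple w = {w, p, q} := by
  ext z
  simp only [mem_triangleAt, mem_insert, mem_singleton]
  constructor
  · rintro (rfl | ⟨c, hz, hc, hzc⟩)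
    · exact Or.inl rfl
    refine Or.inr (by_contra fun hne => ?_)
    rw [not_or] at hne
    obtain rfl | rfl | rfl :=
      hM.eq_or_eq_or_eq_of_adj hwu hwv hp hq hz hpq.ne (Ne.symm hne.1) (Ne.symm hne.2) c hc
    · exact hne.2 (hM.eq_of_triangle_of_triangle hwu hwv hc hq hz hpq hzc.symm).symm
    · exact hne.1 (hM.eq_of_triangle_of_triangle hwu hwv hc hp hz hpq.symm hzc.symm).symm
    · exact hzc.ne rfl
  · rintro (rfl | rfl | rfl)
    exacts [Or.inl rfl, Or.inr ⟨q, hp, hq, hpq⟩, Or.inr ⟨p, hq, hp, hpq.symm⟩]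

theorem ne_of_mem_triangleAt (hM : CubicOneDoubleEdge M u v) {w z : W} (hwu : w ≠ u)
    (hwv : w ≠ v) (hz : z ∈ triangleAt M.toSimple w) : z ≠ u ∧ z ≠ v := by
  obtain ⟨p, q, hp, hq, hpq⟩ := hM.exists_triangle hwu hwv
  rw [hM.triangleAt_eq hwu hwv hp hq hpq, mem_insert, mem_insert, mem_singleton] at hz
  obtain rfl | rfl | rfl := hz
  exacts [⟨hwu, hwv⟩, hM.ne_of_triangle hwu hwv hp hq hpq,
    hM.ne_of_triangle hwu hwv hq hp hpq.symm]

theorem triangleAt_eq_of_mem (hM : CubicOneDoubleEdge M u v) {w z : W} (hwu : w ≠ u)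
    (hwv : w ≠ v) (hz : z ∈ triangleAt M.toSimple w) :
    triangleAt M.toSimple z = triangleAt M.toSimple w := by
  obtain ⟨hzu, hzv⟩ := hM.ne_of_mem_triangleAt hwu hwv hz
  obtain ⟨p, q, hp, hq, hpq⟩ := hM.exists_triangle hwu hwv
  rw [hM.triangleAt_eq hwu hwv hp hq hpq] at hz ⊢
  simp only [mem_insert, mem_singleton] at hz
  obtain rfl | rfl | rfl := hz
  · rw [hM.triangleAt_eq hwu hwv hp hq hpq]
  · rw [hM.triangleAt_eq hzu hzv hp.symm hpq hq, insert_comm]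
  · rw [hM.triangleAt_eq hzu hzv hq.symm hpq.symm hp, insert_comm, pair_comm]

theorem card_triangleAt (hM : CubicOneDoubleEdge M u v) {w : W} (hwu : w ≠ u) (hwv : w ≠ v) :
    (triangleAt M.toSimple w).card = 3 := by
  obtain ⟨p, q, hp, hq, hpq⟩ := hM.exists_triangle hwu hwv
  rw [hM.triangleAt_eq hwu hwv hp hq hpq]
  exact card_eq_three.mpr ⟨w, p, q, hp.ne, hq.ne, hpq.ne, rfl⟩

theorem exists_adj_notMem_triangleAt (hM : CubicOneDoubleEdge M u v) {w : W} (hwu : w ≠ u)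
    (hwv : w ≠ v) : ∃ e, M.toSimple.Adj w e ∧ e ∉ triangleAt M.toSimple w ∧
      ∀ z, M.toSimple.Adj w z → z ∉ triangleAt M.toSimple w → z = e := by
  obtain ⟨p, q, hp, hq, hpq⟩ := hM.exists_triangle hwu hwv
  obtain ⟨e, hep, heq, he, hN⟩ := hM.exists_adj_of_adj_of_adj hwu hwv hp hq hpq.ne
  rw [hM.triangleAt_eq hwu hwv hp hq hpq]
  refine ⟨e, he, by simp [he.ne.symm, hep, heq], fun z hz hzT => ?_⟩
  obtain rfl | rfl | rfl := hN z hz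
  exacts [absurd (by simp) hzT, absurd (by simp) hzT, rfl]

theorem ne_of_mult_eq_one (hM : CubicOneDoubleEdge M u v) {x : W} (hx : M.mult u x = 1) :
    x ≠ u ∧ x ≠ v :=
  ⟨fun h => by simp [h, M.loopless] at hx, fun h => by simp [h, hM.mult_eq_two] at hx⟩

theorem notMem_triangleAt_of_mult_eq_one (hM : CubicOneDoubleEdge M u v) {x y : W}
    (hx : M.mult u x = 1) (hy : M.mult v y = 1) : y ∉ triangleAt M.toSimple x := by
  intro hyT
  have hux : M.toSimple.Adj u x := M.toSimple_adj_iff.mpr (by omega)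
  have hvy : M.toSimple.Adj v y := M.toSimple_adj_iff.mpr (by omega)
  obtain ⟨hxu, hxv⟩ := hM.ne_of_mult_eq_one hx
  obtain ⟨hyv, hyu⟩ := hM.symm.ne_of_mult_eq_one hy
  have hyx : y ≠ x := by
    rintro rfl
    exact hM.not_adj_and_adj ⟨hux, hvy⟩
  obtain ⟨b, hxy, hxb, hyb⟩ := (mem_triangleAt.mp hyT).resolve_left hyx
  obtain ⟨hbu, hbv⟩ := hM.ne_of_triangle hxu hxv hxb hxy hyb.symm
  have hNu := hM.eq_or_eq_of_adj hux hxv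
  have hNv := hM.symm.eq_or_eq_of_adj hvy hyu
  have hNx := hM.eq_or_eq_or_eq_of_adj hxu hxv hux.symm hxy hxb (Ne.symm hyu) (Ne.symm hbu) hyb.ne
  have hNy :=
    hM.eq_or_eq_or_eq_of_adj hyu hyv hvy.symm hxy.symm hyb (Ne.symm hxv) (Ne.symm hbv) hxb.ne
  obtain ⟨c, hcx, hcy, hbc, hNb⟩ :=
    hM.exists_adj_of_adj_of_adj hbu hbv hxb.symm hyb.symm (Ne.symm hyx)
  -- otherwise `bc` would be the only edge leaving `{u, v, x, y, b}`
  have hc : c ∈ ({u, v, x, y, b} : Set W) := by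
    refine hM.bridgeless.mem_of_forall_adj_mem (hM.mult_eq_one hbu hbv hbc) (by simp)
      fun a ha d had hne => ?_
    simp only [Set.mem_insert_iff, Set.mem_singleton_iff] at ha ⊢
    obtain rfl | rfl | rfl | rfl | rfl := ha
    · have := hNu d had; tauto
    · have := hNv d had; tauto
    · have := hNx d had; tauto
    · have := hNy d had; tauto
    · obtain rfl | rfl | rfl := hNb d had
      · tauto
      · tauto
      · exact absurd rfl hne
  simp only [Set.mem_insert_iff, Set.mem_singleton_iff] at hc
  obtain rfl | rfl | rfl | rfl | rfl := hc
  · obtain h | h := hNu b hbc.symm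
    exacts [hbv h, hxb.ne h.symm]
  · obtain h | h := hNv b hbc.symm
    exacts [hbu h, hyb.ne h.symm]
  exacts [hcx rfl, hcy rfl, hbc.ne rfl]

theorem exists_boundary_adj (hM : CubicOneDoubleEdge M u v) {x y : W} (hx : M.mult u x = 1)
    (hy : M.mult v y = 1) {P : W → Prop} (hPx : P x) {b : W} (hbu : b ≠ u) (hbv : b ≠ v)
    (hPb : ¬ P b) :
    ∃ p q, p ≠ u ∧ p ≠ v ∧ q ≠ u ∧ q ≠ v ∧ P p ∧ ¬ P q ∧
      M.toSimple.Adj p q := by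
  by_contra! h
  have hux : M.toSimple.Adj u x := M.toSimple_adj_iff.mpr (by omega)
  have hvy : M.toSimple.Adj v y := M.toSimple_adj_iff.mpr (by omega)
  have hNu := hM.eq_or_eq_of_adj hux (hM.ne_of_mult_eq_one hx).2
  have hNv := hM.symm.eq_or_eq_of_adj hvy (hM.symm.ne_of_mult_eq_one hy).2
  let O : Set W := {w | w = u ∨ w = v ∨ P w}
  have hstep : ∀ c ∈ O, ∀ d, M.toSimple.Adj c d → s(c, d) ≠ s(v, y) → d ∈ O := by
    intro c hc d hcd hne
    by_cases hcu : c = u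
    · subst hcu
      obtain rfl | rfl := hNu d hcd
      exacts [Or.inr (Or.inl rfl), Or.inr (Or.inr hPx)]
    by_cases hcv : c = v
    · subst hcv
      obtain rfl | rfl := hNv d hcd
      exacts [Or.inl rfl, absurd rfl hne]
    have hPc : P c := by simpa [O, hcu, hcv] using hc
    by_cases hdu : d = u
    · exact Or.inl hdu
    by_cases hdv : d = v
    · exact Or.inr (Or.inl hdv)
    exact Or.inr (Or.inr (by_contra fun hPd => h c d hcu hcv hdu hdv hPc hPd hcd))
  -- `O` can only be left through `vy`, which is no bridge
  have hyO : y ∈ O := hM.bridgeless.mem_of_forall_adj_mem hy (Or.inr (Or.inl rfl)) hstep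
  have hclosed : ∀ c ∈ O, ∀ d, M.toSimple.Adj c d → d ∈ O := by
    intro c hc d hcd
    by_cases hne : s(c, d) = s(v, y)
    · obtain ⟨-, rfl⟩ | ⟨-, rfl⟩ := Sym2.eq_iff.mp hne
      exacts [hyO, Or.inr (Or.inl rfl)]
    · exact hstep c hc d hcd hne
  obtain h | h | h := (hM.connected.preconnected u b).mem_of_forall_adj_mem hclosed (Or.inl rfl)
  exacts [hbu h, hbv h, hPb h]

theorem exists_mem_triangleAt_adj_outside (hM : CubicOneDoubleEdge M u v) {x y : W}
    (hx : M.mult u x = 1) (hy : M.mult v y = 1) {q : W} (hqu : q ≠ u) (hqv : q ≠ v) :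
    ∃ a ∈ triangleAt M.toSimple q, a ≠ q ∧ ∃ e, M.toSimple.Adj a e ∧
      e ∉ triangleAt M.toSimple q ∧ e ≠ u ∧ e ≠ v := by
  have hux : M.toSimple.Adj u x := M.toSimple_adj_iff.mpr (by omega)
  have hvy : M.toSimple.Adj v y := M.toSimple_adj_iff.mpr (by omega)
  have hmate : ∀ a ∈ triangleAt M.toSimple q, a ≠ q →
      (∃ e, M.toSimple.Adj a e ∧ e ∉ triangleAt M.toSimple q ∧ e ≠ u ∧ e ≠ v) ∨
        a = x ∨ a = y := by
    intro a ha haq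
    obtain ⟨hau, hav⟩ := hM.ne_of_mem_triangleAt hqu hqv ha
    obtain ⟨e, hae, heT, -⟩ := hM.exists_adj_notMem_triangleAt hau hav
    rw [hM.triangleAt_eq_of_mem hqu hqv ha] at heT
    by_cases heu : e = u
    · subst heu
      exact Or.inr (Or.inl ((hM.eq_or_eq_of_adj hux (hM.ne_of_mult_eq_one hx).2 a
        hae.symm).resolve_left hav))
    by_cases hev : e = v
    · subst hev
      exact Or.inr (Or.inr ((hM.symm.eq_or_eq_of_adj hvy (hM.symm.ne_of_mult_eq_one hy).2 a
        hae.symm).resolve_left hau))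
    exact Or.inl ⟨e, hae, heT, heu, hev⟩
  obtain ⟨a, b, hqa, hqb, hab⟩ := hM.exists_triangle hqu hqv
  have hT := hM.triangleAt_eq hqu hqv hqa hqb hab
  have ha : a ∈ triangleAt M.toSimple q := by simp [hT]
  have hb : b ∈ triangleAt M.toSimple q := by simp [hT]
  obtain h | hax := hmate a ha hqa.ne.symm
  · exact ⟨a, ha, hqa.ne.symm, h⟩
  obtain h | hbx := hmate b hb hqb.ne.symm
  · exact ⟨b, hb, hqb.ne.symm, h⟩
  have hxy : x ∈ triangleAt M.toSimple q ∧ y ∈ triangleAt M.toSimple q := by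
    obtain rfl | rfl := hax <;> obtain rfl | rfl := hbx
    exacts [(hab.ne rfl).elim, ⟨ha, hb⟩, ⟨hb, ha⟩, (hab.ne rfl).elim]
  refine (hM.notMem_triangleAt_of_mult_eq_one hx hy ?_).elim
  rw [hM.triangleAt_eq_of_mem hqu hqv hxy.1]
  exact hxy.2

theorem mObserved_of_adj (hM : CubicOneDoubleEdge M u v) {S : Set W} {w z : W} (hwu : w ≠ u)
    (hwv : w ≠ v) (hT : ∀ z ∈ triangleAt M.toSimple w, MObserved M S z)
    (hz : M.toSimple.Adj w z) : MObserved M S z := by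
  by_cases hzT : z ∈ triangleAt M.toSimple w
  · exact hT z hzT
  obtain ⟨e, -, -, he⟩ := hM.exists_adj_notMem_triangleAt hwu hwv
  refine MObserved.prop w z (hT w (mem_triangleAt_self w)) (hM.mult_eq_one hwu hwv hz)
    fun z' hz' hne => hT z' (by_contra fun hz'T => hne ?_)
  exact (he z' (M.toSimple_adj_iff.mpr hz') hz'T).trans (he z hz hzT).symm

theorem forall_mObserved_triangleAt_of_adj (hM : CubicOneDoubleEdge M u v) {S : Set W}
    {p q a : W} (hpu : p ≠ u) (hpv : p ≠ v) (hqu : q ≠ u) (hqv : q ≠ v)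
    (hpq : M.toSimple.Adj p q) (hpT : p ∉ triangleAt M.toSimple q)
    (hp : ∀ z ∈ triangleAt M.toSimple p, MObserved M S z) (ha : a ∈ triangleAt M.toSimple q)
    (haq : a ≠ q) (hoa : MObserved M S a) :
    ∀ z ∈ triangleAt M.toSimple q, MObserved M S z := by
  obtain ⟨c, hqa, hqc, hac⟩ := (mem_triangleAt.mp ha).resolve_left haq
  have hT := hM.triangleAt_eq hqu hqv hqa hqc hac
  obtain ⟨e, -, -, he⟩ := hM.exists_adj_notMem_triangleAt hqu hqv
  have hoq : MObserved M S q := hM.mObserved_of_adj hpu hpv hp hpq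
  intro z hz
  rw [hT, mem_insert, mem_insert, mem_singleton] at hz
  obtain rfl | rfl | rfl := hz
  · exact hoq
  · exact hoa
  -- `q` has only one neighbour left to observe, namely `z`
  refine MObserved.prop q z hoq (hM.mult_eq_one hqu hqv hqc) fun z' hz' hne => ?_
  have hqz' := M.toSimple_adj_iff.mpr hz'
  by_cases hz'T : z' ∈ triangleAt M.toSimple q
  · rw [hT, mem_insert, mem_insert, mem_singleton] at hz'T
    obtain rfl | rfl | rfl := hz'T
    exacts [(hqz'.ne rfl).elim, hoa, (hne rfl).elim]
  · rw [(he z' hqz' hz'T).trans (he p hpq.symm hpT).symm]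
    exact hp p (mem_triangleAt_self p)

theorem forall_mObserved_triangleAt (hM : CubicOneDoubleEdge M u v) {S : Set W}
    {U : Finset (Finset W)} (hS : ObservesOutside M u v S U) {w : W} (hwu : w ≠ u)
    (hwv : w ≠ v) (hwU : triangleAt M.toSimple w ∉ U) :
    ∀ z ∈ triangleAt M.toSimple w, MObserved M S z := fun z hz => by
  obtain ⟨hzu, hzv⟩ := hM.ne_of_mem_triangleAt hwu hwv hz
  exact hS z hzu hzv (hM.triangleAt_eq_of_mem hwu hwv hz ▸ hwU)

theorem exists_forcing_set (hM : CubicOneDoubleEdge M u v) {x y : W} (hx : M.mult u x = 1)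
    (hy : M.mult v y = 1) (U : Finset (Finset W)) (hxU : triangleAt M.toSimple x ∉ U) :
    ∃ A : Finset W, 2 * A.card ≤ U.card ∧ ∀ S : Set W, ↑A ⊆ S →
      ObservesOutside M u v S U → ObservesOutside M u v S ∅ := by
  induction U using strongInduction with
  | H U ih =>
  by_cases hU : ∃ b, b ≠ u ∧ b ≠ v ∧ triangleAt M.toSimple b ∈ U
  swap
  · exact ⟨∅, by simp, fun S _ hS w hwu hwv _ =>
      hS w hwu hwv fun h => hU ⟨w, hwu, hwv, h⟩⟩
  obtain ⟨b, hbu, hbv, hbU⟩ := hU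
  obtain ⟨p, q, hpu, hpv, hqu, hqv, hpU, hqU, hpq⟩ :=
    hM.exists_boundary_adj hx hy (P := fun w => triangleAt M.toSimple w ∉ U) hxU hbu hbv
      (not_not.mpr hbU)
  simp only [not_not] at hqU
  obtain ⟨a, ha, haq, e, hae, heT, heu, hev⟩ :=
    hM.exists_mem_triangleAt_adj_outside hx hy hqu hqv
  have hpT : p ∉ triangleAt M.toSimple q :=
    fun h => hpU (hM.triangleAt_eq_of_mem hqu hqv h ▸ hqU)
  have hq : ∀ S : Set W, ObservesOutside M u v S U → MObserved M S a →
      ∀ z ∈ triangleAt M.toSimple q, MObserved M S z := fun S hS =>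
    hM.forall_mObserved_triangleAt_of_adj hpu hpv hqu hqv hpq hpT
      (hM.forall_mObserved_triangleAt hS hpu hpv hpU) ha haq
  have ha : ∀ S : Set W, (∀ z ∈ triangleAt M.toSimple e, MObserved M S z) →
      MObserved M S a :=
    fun S h => hM.mObserved_of_adj heu hev h hae.symm
  by_cases heU : triangleAt M.toSimple e ∈ U
  · -- seed `e`: this observes the triangles of both `e` and `q`
    have heU' : triangleAt M.toSimple e ∈ U.erase (triangleAt M.toSimple q) :=
      mem_erase.mpr ⟨fun h => heT (h ▸ mem_triangleAt_self e), heU⟩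
    obtain ⟨A, hA, hAS⟩ := ih ((U.erase _).erase (triangleAt M.toSimple e))
      ((erase_subset _ _).trans_ssubset (erase_ssubset hqU))
      fun h => hxU (mem_of_mem_erase (mem_of_mem_erase h))
    refine ⟨insert e A, ?_, fun S hAS' hS =>
      hAS S ((coe_subset.mpr (subset_insert e A)).trans hAS') ?_⟩
    · have := card_erase_of_mem heU'
      have := card_erase_of_mem hqU
      have := card_insert_le e A
      have := card_pos.mpr ⟨_, heU'⟩
      omega
    · have he : ∀ z ∈ triangleAt M.toSimple e, MObserved M S z :=
        fun z hz => mObserved_of_mem_triangleAt (hAS' (by simp)) hz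
      exact (hS.erase (hq S hS (ha S he))).erase he
  · obtain ⟨A, hA, hAS⟩ := ih _ (erase_ssubset hqU) fun h => hxU (mem_of_mem_erase h)
    refine ⟨A, ?_, fun S hAS' hS => hAS S hAS' (hS.erase (hq S hS (ha S ?_)))⟩
    · rw [card_erase_of_mem hqU] at hA
      omega
    · exact hM.forall_mObserved_triangleAt hS heu hev heU

theorem card_eq_three_mul_card_triangles_add_two (hM : CubicOneDoubleEdge M u v) :
    Fintype.card W = 3 * (triangles M u v).card + 2 := by
  have hI : ({u, v}ᶜ : Finset W).card + 2 = Fintype.card W := by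
    have := card_le_univ ({u, v} : Finset W)
    rw [card_pair hM.ne] at this
    rw [card_compl, card_pair hM.ne]
    omega
  have hfiber : ∀ t ∈ triangles M u v,
      ({w ∈ ({u, v}ᶜ : Finset W) | triangleAt M.toSimple w = t}).card = 3 := by
    intro t ht
    obtain ⟨w, hw, rfl⟩ := mem_image.mp ht
    simp only [mem_compl, mem_insert, mem_singleton, not_or] at hw
    rw [← hM.card_triangleAt hw.1 hw.2]
    congr 1
    ext z
    simp only [mem_filter, mem_compl, mem_insert, mem_singleton, not_or]
    refine ⟨fun h => h.2 ▸ mem_triangleAt_self z, fun hz => ⟨?_, ?_⟩⟩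
    exacts [hM.ne_of_mem_triangleAt hw.1 hw.2 hz, hM.triangleAt_eq_of_mem hw.1 hw.2 hz]
  rw [card_eq_sum_card_image (triangleAt M.toSimple), ← triangles, sum_congr rfl hfiber,
    sum_const, smul_eq_mul] at hI
  omega

theorem even_card_triangles (hM : CubicOneDoubleEdge M u v) : Even (triangles M u v).card := by
  have h := M.even_sum_degree
  simp only [hM.degree_eq_three, sum_const, card_univ, smul_eq_mul,
    hM.card_eq_three_mul_card_triangles_add_two] at h
  rw [Nat.even_iff] at h ⊢
  omega

theorem exists_observing_set (hM : CubicOneDoubleEdge M u v) :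
    ∃ S : Finset W, 2 * S.card ≤ (triangles M u v).card ∧ ∀ z, MObserved M S z := by
  obtain ⟨x, hx⟩ := hM.exists_mult_eq_one
  obtain ⟨y, hy⟩ := hM.symm.exists_mult_eq_one
  obtain ⟨hxu, hxv⟩ := hM.ne_of_mult_eq_one hx
  obtain ⟨hyv, hyu⟩ := hM.symm.ne_of_mult_eq_one hy
  have hxT : triangleAt M.toSimple x ∈ triangles M u v := mem_image_of_mem _ (by simp [hxu, hxv])
  obtain ⟨A, hA, hAS⟩ := hM.exists_forcing_set hx hy _ (notMem_erase _ (triangles M u v))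
  have hseed : ∀ z ∈ triangleAt M.toSimple x, MObserved M ↑(insert x A) z :=
    fun z hz => mObserved_of_mem_triangleAt (by simp) hz
  have hinner : ObservesOutside M u v ↑(insert x A) ∅ := by
    refine hAS _ (by simp) fun w hwu hwv hwU => hseed w ?_
    have hw : triangleAt M.toSimple w ∈ triangles M u v :=
      mem_image_of_mem _ (by simp [hwu, hwv])
    have hwx : triangleAt M.toSimple w = triangleAt M.toSimple x :=
      by_contra fun h => hwU (mem_erase.mpr ⟨h, hw⟩)
    exact hwx ▸ mem_triangleAt_self w
  refine ⟨insert x A, ?_, fun z => ?_⟩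
  · rw [card_erase_of_mem hxT] at hA
    obtain ⟨r, hr⟩ := hM.even_card_triangles
    have := card_insert_le x A
    have := card_pos.mpr ⟨_, hxT⟩
    omega
  by_cases hzu : z = u
  · subst hzu
    exact hM.mObserved_of_adj hxu hxv hseed (M.toSimple_adj_iff.mpr (by rw [M.symm]; omega))
  by_cases hzv : z = v
  · subst hzv
    refine hM.mObserved_of_adj hyu hyv (hM.forall_mObserved_triangleAt hinner hyu hyv
      (notMem_empty _)) (M.toSimple_adj_iff.mpr (by rw [M.symm]; omega))
  exact hinner z hzu hzv (notMem_empty _)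

end CubicOneDoubleEdge

end Setting

end Development

theorem stmt2_general {W : Type} [Fintype W] (M : Multigraph W)
    (hcubic : ∀ v, M.degree v = 3)
    (hclaw : ClawFree M.toSimple) (hdiam : DiamondFree M.toSimple)
    (hconn : M.toSimple.Connected) (hbridgeless : M.Bridgeless)
    (u v : W) (h2 : M.mult u v = 2)
    (hmax : ∀ a b, M.mult a b ≤ 2)
    (huniq : ∀ a b, M.mult a b = 2 → (a = u ∧ b = v) ∨ (a = v ∧ b = u)) :
    (mpdNum M : ℚ) ≤ ((Fintype.card W : ℚ) - 2) / 6 := by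
  have hM : CubicOneDoubleEdge M u v := by
    refine ⟨hcubic, hclaw, hdiam, hconn, hbridgeless, h2, fun a b hau hav => ?_⟩
    by_contra! h
    obtain ⟨rfl, -⟩ | ⟨rfl, -⟩ := huniq a b (le_antisymm (hmax a b) h)
    exacts [hau rfl, hav rfl]
  obtain ⟨S, hS, hobs⟩ := hM.exists_observing_set
  have hle : mpdNum M ≤ S.card := Nat.sInf_le ⟨S, rfl, hobs⟩
  have hmpd : 2 * (mpdNum M : ℚ) ≤ (triangles M u v).card := by exact_mod_cast (by omega)
  rw [hM.card_eq_three_mul_card_triangles_add_two]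
  push_cast
  linarith

theorem stmt2 {W : Type} [Fintype W] (M : Multigraph W)
    (hcubic : ∀ v, M.degree v = 3)
    (hclaw : ClawFree M.toSimple) (hdiam : DiamondFree M.toSimple)
    (hconn : M.toSimple.Connected) (hbridgeless : M.Bridgeless)
    (u v : W) (huv : u ≠ v) (h2 : M.mult u v = 2)
    (hmax : ∀ a b, M.mult a b ≤ 2)
    (huniq : ∀ a b, M.mult a b = 2 → (a = u ∧ b = v) ∨ (a = v ∧ b = u)) :
    (mpdNum M : ℚ) ≤ ((Fintype.card W : ℚ) - 2) / 6 :=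
  stmt2_general M hcubic hclaw hdiam hconn hbridgeless u v h2 hmax huniq

end PaperPD
end

section
/- For any graph G, the number of strong support vertices of G is at most γ_P(G). -/
namespace PaperPD

open SimpleGraph

variable {V : Type} {W : Type}

/-! A strong support vertex `x` with leaves `a ≠ b` forces every power dominating set to meet
`{x} ∪ {leaves at x}`: otherwise `a` and `b` are never observed, because their only neighbour `x`
can propagate to one of them only once the other is observed. These sets are pairwise disjoint
for distinct strong support vertices, which are not leaves themselves. -/

def leafClosedNbhd (G : SimpleGraph V) (x : V) : Set V :=
  {y | y = x ∨ (IsLeaf G y ∧ G.Adj x y)}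

section

variable {G : SimpleGraph V}

lemma IsLeaf.eq_of_adj {a x u : V} (ha : IsLeaf G a) (hxa : G.Adj x a) (hua : G.Adj u a) :
    u = x :=
  ha.unique hua.symm hxa.symm

lemma IsStrongSupport.not_isLeaf {x : V} (hx : IsStrongSupport G x) : ¬ IsLeaf G x := by
  obtain ⟨a, b, hab, hxa, hxb, -, -⟩ := hx
  rintro ⟨u, -, huniq⟩
  exact hab ((huniq a hxa).trans (huniq b hxb).symm)

lemma Observed.ne_of_leaves {S : Set V} {x a b v : V} (hab : a ≠ b) (hxa : G.Adj x a)
    (hxb : G.Adj x b) (ha : IsLeaf G a) (hb : IsLeaf G b) (hxS : x ∉ S) (haS : a ∉ S)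
    (hbS : b ∉ S) (hv : Observed G S v) : v ≠ a ∧ v ≠ b := by
  induction hv with
  | mem v hvS => exact ⟨ne_of_mem_of_not_mem hvS haS, ne_of_mem_of_not_mem hvS hbS⟩
  | dom u v huS huv =>
    constructor <;> rintro rfl
    · exact hxS (ha.eq_of_adj hxa huv ▸ huS)
    · exact hxS (hb.eq_of_adj hxb huv ▸ huS)
  | prop u v _ huv _ _ ih_nbrs =>
    constructor <;> rintro rfl
    · obtain rfl := ha.eq_of_adj hxa huv
      exact (ih_nbrs b hxb hab.symm).2 rfl
    · obtain rfl := hb.eq_of_adj hxb huv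
      exact (ih_nbrs a hxa hab).1 rfl

lemma IsPDS.exists_mem_leafClosedNbhd {S : Set V} (hS : IsPDS G S) {x : V}
    (hx : IsStrongSupport G x) : ∃ y ∈ S, y ∈ leafClosedNbhd G x := by
  by_contra! hmiss
  obtain ⟨a, b, hab, hxa, hxb, ha, hb⟩ := hx
  have hxS : x ∉ S := fun h => hmiss x h (Or.inl rfl)
  have haS : a ∉ S := fun h => hmiss a h (Or.inr ⟨ha, hxa⟩)
  have hbS : b ∉ S := fun h => hmiss b h (Or.inr ⟨hb, hxb⟩)
  exact (Observed.ne_of_leaves hab hxa hxb ha hb hxS haS hbS (hS a)).1 rfl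

lemma eq_of_mem_leafClosedNbhd {x x' y : V} (hx : ¬ IsLeaf G x) (hx' : ¬ IsLeaf G x')
    (hy : y ∈ leafClosedNbhd G x) (hy' : y ∈ leafClosedNbhd G x') : x = x' := by
  rcases hy with rfl | ⟨hy, hxy⟩ <;> rcases hy' with rfl | ⟨hy', hx'y⟩
  · rfl
  · exact absurd hy' hx
  · exact absurd hy hx'
  · exact (hy.eq_of_adj hxy hx'y).symm

end

lemma exists_isPDS_card_eq_pdNum [Fintype V] (G : SimpleGraph V) :
    ∃ S : Finset V, S.card = pdNum G ∧ IsPDS G S :=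
  Nat.sInf_mem (s := {n | ∃ S : Finset V, S.card = n ∧ IsPDS G ↑S})
    ⟨_, Finset.univ, rfl, fun v => Observed.mem v (Finset.mem_coe.2 (Finset.mem_univ v))⟩

theorem stmt9 {V : Type} [Fintype V] (G : SimpleGraph V) :
    ssCount G ≤ pdNum G := by
  obtain ⟨S, hcard, hS⟩ := exists_isPDS_card_eq_pdNum G
  choose f hfS hfN using fun x : {v // IsStrongSupport G v} => hS.exists_mem_leafClosedNbhd x.2
  have hf : Function.Injective fun x => (⟨f x, hfS x⟩ : S) := by
    intro x x' h
    have hfx : f x = f x' := Subtype.ext_iff.1 h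
    exact Subtype.ext <|
      eq_of_mem_leafClosedNbhd x.2.not_isLeaf x'.2.not_isLeaf (hfN x) (hfx ▸ hfN x')
  rw [ssCount, ← hcard, ← Nat.card_eq_finsetCard]
  exact Nat.card_le_card_of_injective _ hf

end PaperPD
end

section
/- If a claw-free diamond-free cubic graph G of order n has a 2-factor C₁ ∪ ⋯ ∪ C_k in which every cycle C_i has length at least 6, then γ_P(G) ≥ k; consequently, if G has a 2-factor consisting only of 6-cycles, then γ_P(G) = n/6. -/
/-!
In a cubic, claw-free, diamond-free graph every vertex lies in exactly one triangle (a `K₄`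
would be a whole component, carrying a cycle of `F` of length at most 4). A 2-factor `F`
without short cycles meets each triangle in a path of two edges; call the two ends of that path
*exits*. Every cycle of `F` contains an exit, and all neighbours of an exit lie on its cycle.
If a power dominating set `S` missed a cycle `C`, then by induction along the observation
process no exit of `C` would ever be observed: an exit of `C` can only be forced by a non-exit
`u` of `C`, and the two triangle-mates of `u` are exits of `C`, one of which would have to be
observed first. Hence `S` meets every cycle. When all cycles are 6-cycles, one exit per cycle
is a power dominating set: an exit observes its closed neighbourhood, and two forcing steps
observe the remaining two vertices of its cycle.
-/

namespace PaperPD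

open SimpleGraph

variable {V : Type} {W : Type}

section General

variable {V : Type} {G F : SimpleGraph V} {v w p q : V}

lemma supp_subset_of_forall_adj_mem {K : Set V} (hK : ∀ x ∈ K, ∀ y, F.Adj x y → y ∈ K)
    (hv : v ∈ K) : (F.connectedComponentMk v).supp ⊆ K := by
  intro w hw
  obtain ⟨p⟩ := (SimpleGraph.ConnectedComponent.exact hw).symm
  clear hw
  induction p with
  | nil => exact hv
  | cons h _ ih => exact ih (hK _ hv _ h)

lemma card_le_of_forall_adj_mem {K : Finset V} (hK : ∀ x ∈ K, ∀ y, F.Adj x y → y ∈ K)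
    (hv : v ∈ K) : Nat.card (F.connectedComponentMk v).supp ≤ K.card :=
  (Nat.card_mono K.finite_toSet (supp_subset_of_forall_adj_mem hK hv)).trans (by simp)

variable [Fintype V]

lemma mem_of_card_supp_le {K : Finset V}
    (hK : ∀ x ∈ K, F.connectedComponentMk x = F.connectedComponentMk v)
    (hcard : Nat.card (F.connectedComponentMk v).supp ≤ K.card)
    (hw : F.connectedComponentMk w = F.connectedComponentMk v) : w ∈ K := by
  have hsupp := Set.eq_of_subset_of_ncard_le (s := (K : Set V))
    (t := (F.connectedComponentMk v).supp) hK
    (by rwa [← Nat.card_coe_set_eq, Set.ncard_coe_finset])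
  rw [← Finset.mem_coe, hsupp]
  exact hw

lemma card_eq_of_card_supp_eq {n : ℕ} (h : ∀ c : F.ConnectedComponent, Nat.card c.supp = n) :
    Fintype.card V = n * Nat.card F.ConnectedComponent := by
  rw [← Nat.card_eq_fintype_card, ← Nat.card_congr (Equiv.sigmaFiberEquiv F.connectedComponentMk),
    Nat.card_sigma, Nat.card_eq_fintype_card (α := F.ConnectedComponent)]
  exact (Finset.sum_const_nat fun c _ => h c).trans (mul_comm _ _)

variable [DecidableRel G.Adj]

lemma mem_of_adj_of_degree_le_card {s : Finset V} (hs : ∀ x ∈ s, G.Adj v x)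
    (hcard : G.degree v ≤ s.card) (hw : G.Adj v w) : w ∈ s := by
  have hsub : s ⊆ G.neighborFinset v := fun x hx => (G.mem_neighborFinset v x).2 (hs x hx)
  rw [Finset.eq_of_subset_of_card_le hsub (by rwa [G.card_neighborFinset_eq_degree])]
  exact (G.mem_neighborFinset v w).2 hw

lemma eq_or_eq_of_degree_eq_two (hv : G.degree v = 2) (hp : G.Adj v p) (hq : G.Adj v q)
    (hpq : p ≠ q) (hw : G.Adj v w) : w = p ∨ w = q := by
  classical
  simpa using mem_of_adj_of_degree_le_card (s := {p, q}) (by simp [hp, hq])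
    (by simp [hpq, hv]) hw

lemma exists_adj_ne_of_one_lt_degree (hv : 1 < G.degree v) (p : V) :
    ∃ q, q ≠ p ∧ G.Adj v q := by
  obtain ⟨q, hq, hqp⟩ := Finset.exists_mem_ne (s := G.neighborFinset v)
    (by rwa [G.card_neighborFinset_eq_degree]) p
  exact ⟨q, hqp, (G.mem_neighborFinset v q).1 hq⟩

lemma exists_adj_forall_of_degree_eq_three (hv : G.degree v = 3) (hp : G.Adj v p)
    (hq : G.Adj v q) (hpq : p ≠ q) :
    ∃ r, r ≠ p ∧ r ≠ q ∧ G.Adj v r ∧ ∀ w, G.Adj v w → w = p ∨ w = q ∨ w = r := by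
  classical
  obtain ⟨r, hr, hrpq⟩ := Finset.exists_mem_notMem_of_card_lt_card
    (s := {p, q}) (t := G.neighborFinset v)
    (by rw [G.card_neighborFinset_eq_degree, hv]
        exact (Finset.card_le_two (a := p) (b := q)).trans_lt (by norm_num))
  simp only [Finset.mem_insert, Finset.mem_singleton, not_or] at hrpq
  have hvr := (G.mem_neighborFinset v r).1 hr
  refine ⟨r, hrpq.1, hrpq.2, hvr, fun w hw => ?_⟩
  simpa using mem_of_adj_of_degree_le_card (s := {p, q, r}) (by simp [hp, hq, hvr])
    (by simp [hpq, Ne.symm hrpq.1, Ne.symm hrpq.2, hv]) hw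

lemma mem_of_isNClique_of_adj {d : ℕ} {t : Finset V} (hG : G.IsRegularOfDegree d)
    (ht : G.IsNClique (d + 1) t) (hv : v ∈ t) (hw : G.Adj v w) : w ∈ t := by
  classical
  refine Finset.mem_of_mem_erase (a := v)
    (mem_of_adj_of_degree_le_card (s := t.erase v) (fun x hx => ?_) ?_ hw)
  · exact ht.isClique hv (Finset.mem_of_mem_erase hx) (Finset.ne_of_mem_erase hx).symm
  · rw [Finset.card_erase_of_mem hv, ht.card_eq, hG.degree_eq]; rfl

lemma cliqueFree_four (hG : G.IsRegularOfDegree 3) (hle : F ≤ G)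
    (hbig : ∀ c : F.ConnectedComponent, 6 ≤ Nat.card c.supp) : G.CliqueFree 4 := by
  intro t ht
  obtain ⟨v, hv⟩ : t.Nonempty := Finset.card_pos.1 (by rw [ht.card_eq]; norm_num)
  have := (hbig _).trans (card_le_of_forall_adj_mem
    (fun x hx y hxy => mem_of_isNClique_of_adj hG ht hx (hle hxy)) hv)
  rw [ht.card_eq] at this
  omega

variable [DecidableRel F.Adj]

lemma cliqueFree_three (hF : F.IsRegularOfDegree 2)
    (hbig : ∀ c : F.ConnectedComponent, 6 ≤ Nat.card c.supp) : F.CliqueFree 3 := by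
  intro t ht
  obtain ⟨v, hv⟩ : t.Nonempty := Finset.card_pos.1 (by rw [ht.card_eq]; norm_num)
  have := (hbig _).trans (card_le_of_forall_adj_mem
    (fun x hx y hxy => mem_of_isNClique_of_adj hF ht hx hxy) hv)
  rw [ht.card_eq] at this
  omega

end General

section ClawFreeCubic

variable {V : Type} {G F : SimpleGraph V} {u v w p q : V}

lemma eq_of_two_triangles (hdiam : DiamondFree G) (hK4 : G.CliqueFree 4) {r : V}
    (hvp : G.Adj v p) (hvq : G.Adj v q) (hpq : G.Adj p q) (hvr : G.Adj v r) (hpr : G.Adj p r) :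
    r = q := by
  by_contra hrq
  by_cases hqr : G.Adj q r
  · classical
    refine hK4 {v, p, q, r} ⟨?_, ?_⟩
    · simp [SimpleGraph.isClique_insert, hvp, hvq, hvr, hpq, hpr, hqr, hvp.ne, hvq.ne, hvr.ne,
        hpq.ne, hpr.ne, hqr.ne]
    · simp [hvp.ne, hvq.ne, hvr.ne, hpq.ne, hpr.ne, hqr.ne]
  · exact hdiam q v p r hvq.ne.symm hpq.ne.symm (Ne.symm hrq) hvp.ne hvr.ne hpr.ne hvq.symm
      hpq.symm hvp hvr hpr hqr

variable [Fintype V] [DecidableRel G.Adj] [DecidableRel F.Adj]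

lemma exists_triangle_of_forall_not_adj (hclaw : ClawFree G) (hG : G.IsRegularOfDegree 3)
    (hu : G.Adj v u) (hnot : ∀ w, G.Adj v w → ¬ G.Adj u w) :
    ∃ a b, G.Adj v a ∧ G.Adj v b ∧ G.Adj a b ∧ ∀ w, G.Adj v w → w = u ∨ w = a ∨ w = b := by
  obtain ⟨a, hau, ha⟩ :=
    exists_adj_ne_of_one_lt_degree (v := v) (by rw [hG.degree_eq]; norm_num) u
  obtain ⟨b, hbu, hba, hb, hnbr⟩ :=
    exists_adj_forall_of_degree_eq_three (hG.degree_eq v) hu ha hau.symm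
  refine ⟨a, b, ha, hb, ?_, hnbr⟩
  by_contra hab
  exact hclaw v u a b hau.symm hbu.symm hba.symm hu ha hb (hnot a ha) (hnot b hb) hab

lemma exists_triangle (hclaw : ClawFree G) (hG : G.IsRegularOfDegree 3) (v : V) :
    ∃ p q, G.Adj v p ∧ G.Adj v q ∧ G.Adj p q := by
  obtain ⟨u, -, hu⟩ :=
    exists_adj_ne_of_one_lt_degree (v := v) (by rw [hG.degree_eq]; norm_num) v
  by_cases h : ∃ w, G.Adj v w ∧ G.Adj u w
  · obtain ⟨w, hw, huw⟩ := h
    exact ⟨u, w, hu, hw, huw⟩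
  · push Not at h
    obtain ⟨a, b, ha, hb, hab, -⟩ := exists_triangle_of_forall_not_adj hclaw hG hu h
    exact ⟨a, b, ha, hb, hab⟩

lemma adj_or_adj_of_triangle (hG : G.IsRegularOfDegree 3) (hle : F ≤ G)
    (hF : F.IsRegularOfDegree 2) (hp : G.Adj v p) (hq : G.Adj v q) (hpq : G.Adj p q) :
    F.Adj v p ∨ F.Adj v q := by
  obtain ⟨r, -, -, -, hnbr⟩ :=
    exists_adj_forall_of_degree_eq_three (hG.degree_eq v) hp hq hpq.ne
  by_contra! h
  obtain ⟨x, hxr, hx⟩ :=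
    exists_adj_ne_of_one_lt_degree (v := v) (by rw [hF.degree_eq]; norm_num) r
  rcases hnbr x (hle hx) with rfl | rfl | rfl
  exacts [h.1 hx, h.2 hx, hxr rfl]

lemma reachable_of_triangle (hG : G.IsRegularOfDegree 3) (hle : F ≤ G)
    (hF : F.IsRegularOfDegree 2) (huv : G.Adj u v) (huw : G.Adj u w) (hvw : G.Adj v w) :
    F.Reachable u v := by
  rcases adj_or_adj_of_triangle hG hle hF huv huw hvw with h | h
  · exact h.reachable
  rcases adj_or_adj_of_triangle hG hle hF huv.symm hvw huw with h' | h'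
  · exact h'.reachable.symm
  · exact h.reachable.trans h'.reachable.symm

/-- `v` is an end of the path in which `F` meets the triangle of `v`. -/
def IsExit (G F : SimpleGraph V) (v : V) : Prop :=
  ∃ u, F.Adj v u ∧ ∀ w, G.Adj v w → ¬ G.Adj u w

lemma reachable_of_isExit (hclaw : ClawFree G) (hG : G.IsRegularOfDegree 3) (hle : F ≤ G)
    (hF : F.IsRegularOfDegree 2) (hv : IsExit G F v) (hw : G.Adj v w) : F.Reachable v w := by
  obtain ⟨u, hu, hnot⟩ := hv
  obtain ⟨a, b, ha, hb, hab, hnbr⟩ := exists_triangle_of_forall_not_adj hclaw hG (hle hu) hnot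
  rcases hnbr w hw with rfl | rfl | rfl
  · exact hu.reachable
  · exact reachable_of_triangle hG hle hF ha hb hab
  · exact reachable_of_triangle hG hle hF hb ha hab.symm

lemma eq_or_eq_of_triangle (hG : G.IsRegularOfDegree 3) (hdiam : DiamondFree G)
    (hK4 : G.CliqueFree 4) (hp : G.Adj v p) (hq : G.Adj v q) (hpq : G.Adj p q) {x y : V}
    (hx : G.Adj v x) (hy : G.Adj v y) (hxy : G.Adj x y) : x = p ∨ x = q := by
  obtain ⟨r, hrp, hrq, -, hnbr⟩ :=
    exists_adj_forall_of_degree_eq_three (hG.degree_eq v) hp hq hpq.ne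
  refine (hnbr x hx).imp_right fun hxqr => hxqr.resolve_right ?_
  rintro rfl
  rcases hnbr y hy with rfl | rfl | rfl
  · exact hrq (eq_of_two_triangles hdiam hK4 hy hq hpq hx hxy.symm)
  · exact hrp (eq_of_two_triangles hdiam hK4 hy hp hpq.symm hx hxy.symm)
  · exact hxy.ne rfl

lemma adj_of_not_isExit (hG : G.IsRegularOfDegree 3) (hle : F ≤ G)
    (hF : F.IsRegularOfDegree 2) (hdiam : DiamondFree G) (hK4 : G.CliqueFree 4)
    (hv : ¬ IsExit G F v) (hp : G.Adj v p) (hq : G.Adj v q) (hpq : G.Adj p q) :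
    F.Adj v p ∧ F.Adj v q := by
  have hmem : ∀ x, F.Adj v x → x = p ∨ x = q := by
    intro x hx
    simp only [IsExit, not_exists, not_and, not_forall, not_not] at hv
    obtain ⟨w, hw, hxw⟩ := hv x hx
    exact eq_or_eq_of_triangle hG hdiam hK4 hp hq hpq (hle hx) hw hxw
  have hdeg : 1 < F.degree v := by rw [hF.degree_eq]; norm_num
  obtain ⟨x, hxq, hx⟩ := exists_adj_ne_of_one_lt_degree hdeg q
  obtain ⟨y, hyp, hy⟩ := exists_adj_ne_of_one_lt_degree hdeg p
  exact ⟨(hmem x hx).resolve_right hxq ▸ hx, (hmem y hy).resolve_left hyp ▸ hy⟩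

lemma isExit_of_not_isExit (hG : G.IsRegularOfDegree 3) (hle : F ≤ G)
    (hF : F.IsRegularOfDegree 2) (hdiam : DiamondFree G)
    (hbig : ∀ c : F.ConnectedComponent, 6 ≤ Nat.card c.supp) (hu : ¬ IsExit G F u)
    (hp : G.Adj u p) (hq : G.Adj u q) (hpq : G.Adj p q) : IsExit G F p := by
  classical
  have hK4 := cliqueFree_four hG hle hbig
  by_contra hp'
  obtain ⟨hup, huq⟩ := adj_of_not_isExit hG hle hF hdiam hK4 hu hp hq hpq
  obtain ⟨-, hpq'⟩ := adj_of_not_isExit hG hle hF hdiam hK4 hp' hp.symm hpq hq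
  exact cliqueFree_three hF hbig {u, p, q} (is3Clique_triple_iff.2 ⟨hup, huq, hpq'⟩)

end ClawFreeCubic

section LowerBound

variable {V : Type} [Fintype V] {G F : SimpleGraph V} [DecidableRel G.Adj] [DecidableRel F.Adj]

lemma exists_isExit (hclaw : ClawFree G) (hG : G.IsRegularOfDegree 3) (hle : F ≤ G)
    (hF : F.IsRegularOfDegree 2) (hdiam : DiamondFree G)
    (hbig : ∀ c : F.ConnectedComponent, 6 ≤ Nat.card c.supp) (c : F.ConnectedComponent) :
    ∃ v, F.connectedComponentMk v = c ∧ IsExit G F v := by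
  obtain ⟨v, rfl⟩ := c.exists_rep
  by_cases hv : IsExit G F v
  · exact ⟨v, rfl, hv⟩
  obtain ⟨p, q, hp, hq, hpq⟩ := exists_triangle hclaw hG v
  exact ⟨p, (ConnectedComponent.sound (reachable_of_triangle hG hle hF hp hq hpq)).symm,
    isExit_of_not_isExit hG hle hF hdiam hbig hv hp hq hpq⟩

lemma exists_mem_of_isPDS (hclaw : ClawFree G) (hG : G.IsRegularOfDegree 3) (hle : F ≤ G)
    (hF : F.IsRegularOfDegree 2) (hdiam : DiamondFree G)
    (hbig : ∀ c : F.ConnectedComponent, 6 ≤ Nat.card c.supp) {S : Set V} (hS : IsPDS G S)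
    (c : F.ConnectedComponent) : ∃ s ∈ S, F.connectedComponentMk s = c := by
  by_contra! hS_c
  have not_isExit_of_observed :
      ∀ x, Observed G S x → F.connectedComponentMk x = c → ¬ IsExit G F x := by
    intro x hx
    induction hx with
    | mem x hx => exact fun hxc _ => hS_c x hx hxc
    | dom u x hu hux =>
      intro hxc hx
      exact hS_c u hu ((ConnectedComponent.sound
        (reachable_of_isExit hclaw hG hle hF hx hux.symm)).symm.trans hxc)
    | prop u x _ hux hall ihu ihall =>
      intro hxc hx
      have huc : F.connectedComponentMk u = c := (ConnectedComponent.sound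
        (reachable_of_isExit hclaw hG hle hF hx hux.symm)).symm.trans hxc
      have hmate : ∀ {p q}, G.Adj u p → G.Adj u q → G.Adj p q → p ≠ x → False :=
        fun hp hq hpq hpx => ihall _ hp hpx
          ((ConnectedComponent.sound (reachable_of_triangle hG hle hF hp hq hpq)).symm.trans huc)
          (isExit_of_not_isExit hG hle hF hdiam hbig (ihu huc) hp hq hpq)
      obtain ⟨p, q, hp, hq, hpq⟩ := exists_triangle hclaw hG u
      by_cases hpx : p = x
      · exact hmate hq hp hpq.symm (hpx ▸ hpq.ne.symm)
      · exact hmate hp hq hpq hpx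
  obtain ⟨v, hvc, hv⟩ := exists_isExit hclaw hG hle hF hdiam hbig c
  exact not_isExit_of_observed v (hS v) hvc hv

lemma card_connectedComponent_le_pdNum (hclaw : ClawFree G) (hG : G.IsRegularOfDegree 3)
    (hle : F ≤ G) (hF : F.IsRegularOfDegree 2) (hdiam : DiamondFree G)
    (hbig : ∀ c : F.ConnectedComponent, 6 ≤ Nat.card c.supp) :
    Nat.card F.ConnectedComponent ≤ pdNum G := by
  refine le_csInf ⟨_, Finset.univ, rfl, fun v => .mem v (by simp)⟩ ?_
  rintro n ⟨S, rfl, hS⟩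
  have hsurj : Function.Surjective fun s : S => F.connectedComponentMk s := fun c => by
    obtain ⟨s, hs, rfl⟩ := exists_mem_of_isPDS hclaw hG hle hF hdiam hbig hS c
    exact ⟨⟨s, hs⟩, rfl⟩
  simpa using Nat.card_le_card_of_surjective _ hsurj

end LowerBound

section Observation

variable {V : Type} {G : SimpleGraph V} {S : Set V} {s a b c x y : V}

lemma observed_of_forcing_chain (hsS : s ∈ S) (ha : G.Adj s a) (hb : G.Adj s b)
    (hc : G.Adj s c) (hbx : G.Adj b x) (hbnbr : ∀ z, G.Adj b z → z = s ∨ z = a ∨ z = x)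
    (hcy : G.Adj c y) (hcnbr : ∀ z, G.Adj c z → z = s ∨ z = x ∨ z = y) :
    ∀ z, z = s ∨ z = a ∨ z = b ∨ z = c ∨ z = x ∨ z = y → Observed G S z := by
  have hs : Observed G S s := .mem s hsS
  have ha' : Observed G S a := .dom s a hsS ha
  have hb' : Observed G S b := .dom s b hsS hb
  have hx' : Observed G S x := .prop b x hb' hbx fun z hz hzx => by
    rcases hbnbr z hz with rfl | rfl | rfl
    exacts [hs, ha', absurd rfl hzx]
  have hc' : Observed G S c := .dom s c hsS hc
  have hy' : Observed G S y := .prop c y hc' hcy fun z hz hzy => by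
    rcases hcnbr z hz with rfl | rfl | rfl
    exacts [hs, hx', absurd rfl hzy]
  rintro z (rfl | rfl | rfl | rfl | rfl | rfl)
  exacts [hs, ha', hb', hc', hx', hy']

end Observation

section SixCycles

variable {V : Type} [Fintype V] {G F : SimpleGraph V} [DecidableRel G.Adj] [DecidableRel F.Adj]
  {s a b c x y z w : V}

lemma exists_adj_forall_of_not_adj (hG : G.IsRegularOfDegree 3) (hle : F ≤ G)
    (hF : F.IsRegularOfDegree 2) (hbs : G.Adj b s) (hba : G.Adj b a) (hsa : s ≠ a)
    (hnbs : ¬ F.Adj b s) :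
    ∃ c, F.Adj b c ∧ c ≠ s ∧ c ≠ a ∧ ∀ w, G.Adj b w → w = s ∨ w = a ∨ w = c := by
  obtain ⟨r, hrs, hra, -, hnbr⟩ :=
    exists_adj_forall_of_degree_eq_three (hG.degree_eq b) hbs hba hsa
  obtain ⟨c, hca, hc⟩ :=
    exists_adj_ne_of_one_lt_degree (v := b) (by rw [hF.degree_eq]; norm_num) a
  rcases hnbr c (hle hc) with rfl | rfl | rfl
  · exact absurd hc hnbs
  · exact absurd rfl hca
  · exact ⟨c, hc, hrs, hra, hnbr⟩

lemma eq_or_eq_of_card_supp_eq_six (hG : G.IsRegularOfDegree 3) (hle : F ≤ G)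
    (hF : F.IsRegularOfDegree 2) (hsc : F.Adj s c) (hnot : ∀ w, G.Adj s w → ¬ G.Adj c w)
    (ha : G.Adj s a) (hb : G.Adj s b) (hab : G.Adj a b) (hx : G.Adj c x) (hy : G.Adj c y)
    (hxy : G.Adj x y) (h6 : Nat.card (F.connectedComponentMk s).supp = 6)
    (hz : F.connectedComponentMk z = F.connectedComponentMk s) :
    z = s ∨ z = a ∨ z = b ∨ z = c ∨ z = x ∨ z = y := by
  classical
  have hmk : ∀ {u v w}, G.Adj u v → G.Adj u w → G.Adj v w →
      F.connectedComponentMk v = F.connectedComponentMk u := fun huv huw hvw =>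
    (ConnectedComponent.sound (reachable_of_triangle hG hle hF huv huw hvw)).symm
  have hcs : F.connectedComponentMk c = F.connectedComponentMk s :=
    (ConnectedComponent.sound hsc.reachable).symm
  have hca : c ≠ a := fun h => hnot b hb (h ▸ hab)
  have hcb : c ≠ b := fun h => hnot a ha (h ▸ hab.symm)
  have hxs : x ≠ s := fun h => hnot y (h ▸ hxy) hy
  have hys : y ≠ s := fun h => hnot x (h ▸ hxy.symm) hx
  have hxa : x ≠ a := fun h => hnot a ha (h ▸ hx)
  have hxb : x ≠ b := fun h => hnot b hb (h ▸ hx)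
  have hya : y ≠ a := fun h => hnot a ha (h ▸ hy)
  have hyb : y ≠ b := fun h => hnot b hb (h ▸ hy)
  have hmem : z ∈ ({s, a, b, c, x, y} : Finset V) := by
    refine mem_of_card_supp_le ?_ ?_ hz
    · simp only [Finset.mem_insert, Finset.mem_singleton, forall_eq_or_imp, forall_eq, true_and]
      exact ⟨hmk ha hb hab, hmk hb ha hab.symm, hcs, (hmk hx hy hxy).trans hcs,
        (hmk hy hx hxy.symm).trans hcs⟩
    · rw [h6]
      simp [ha.ne, hb.ne, (hle hsc).ne, hab.ne, hca.symm, hcb.symm, hxs.symm, hys.symm,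
        hxa.symm, hxb.symm, hya.symm, hyb.symm, hx.ne, hy.ne, hxy.ne]
  simpa using hmem

lemma observed_of_isExit (hclaw : ClawFree G) (hG : G.IsRegularOfDegree 3) (hle : F ≤ G)
    (hF : F.IsRegularOfDegree 2) (h6 : ∀ c : F.ConnectedComponent, Nat.card c.supp = 6)
    {S : Set V} (hs : IsExit G F s) (hsS : s ∈ S)
    (hw : F.connectedComponentMk w = F.connectedComponentMk s) : Observed G S w := by
  obtain ⟨c, hsc, hnot⟩ := hs
  obtain ⟨a, b, ha, hb, hab, -⟩ := exists_triangle_of_forall_not_adj hclaw hG (hle hsc) hnot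
  wlog hsa : F.Adj s a generalizing a b
  · exact this b a hb ha hab.symm
      ((adj_or_adj_of_triangle hG hle hF ha hb hab).resolve_left hsa)
  have hca : c ≠ a := fun h => hnot b hb (h ▸ hab)
  have hbs : ¬ F.Adj b s := fun h =>
    (eq_or_eq_of_degree_eq_two (hF.degree_eq s) hsc hsa hca h.symm).elim
      (fun hbc => hnot a ha (hbc ▸ hab.symm)) hab.ne'
  obtain ⟨d, hbd, hds, hda, hbnbr⟩ :=
    exists_adj_forall_of_not_adj hG hle hF hb.symm hab.symm ha.ne hbs
  obtain ⟨x, y, hx, hy, hxy, hcnbr⟩ :=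
    exists_triangle_of_forall_not_adj hclaw hG (hle hsc).symm fun z hz hsz => hnot z hsz hz
  have hK := fun {z : V} =>
    eq_or_eq_of_card_supp_eq_six (z := z) hG hle hF hsc hnot ha hb hab hx hy hxy (h6 _)
  have hd : d = x ∨ d = y := by
    have hdb : d ≠ b := hbd.ne.symm
    have hdc : d ≠ c := fun h => hnot b hb (h ▸ hle hbd).symm
    have hbd' : F.Reachable s d := (reachable_of_triangle hG hle hF hb ha hab.symm).trans
      hbd.reachable
    simpa [hds, hda, hdb, hdc] using hK (ConnectedComponent.sound hbd').symm
  rcases hd with rfl | rfl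
  · exact observed_of_forcing_chain hsS ha hb (hle hsc) (hle hbd) hbnbr hy hcnbr w (hK hw)
  · refine observed_of_forcing_chain hsS ha hb (hle hsc) (hle hbd) hbnbr hx
      (fun z hz => ?_) w ?_
    · rcases hcnbr z hz with h | h | h <;> simp [h]
    · rcases hK hw with h | h | h | h | h | h <;> simp [h]

lemma pdNum_le_card_connectedComponent (hclaw : ClawFree G) (hG : G.IsRegularOfDegree 3)
    (hle : F ≤ G) (hF : F.IsRegularOfDegree 2) (hdiam : DiamondFree G)
    (h6 : ∀ c : F.ConnectedComponent, Nat.card c.supp = 6) :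
    pdNum G ≤ Nat.card F.ConnectedComponent := by
  classical
  choose e he using exists_isExit hclaw hG hle hF hdiam fun c => (h6 c).ge
  have : Fintype F.ConnectedComponent := Fintype.ofFinite _
  unfold pdNum
  refine le_trans (Nat.sInf_le ⟨Finset.univ.image e, rfl, fun w => ?_⟩) ?_
  · exact observed_of_isExit hclaw hG hle hF h6 (he _).2 (by simp) (he _).1.symm
  · rw [Nat.card_eq_fintype_card]
    exact Finset.card_image_le

end SixCycles

theorem stmt18 {V : Type} [Fintype V] (G F : SimpleGraph V)
    [DecidableRel G.Adj] [DecidableRel F.Adj]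
    (hclaw : ClawFree G) (hdiam : DiamondFree G)
    (hcubic : ∀ v, G.degree v = 3)
    (hle : F ≤ G) (h2reg : ∀ v, F.degree v = 2)
    (hbig : ∀ c : F.ConnectedComponent,
      6 ≤ Nat.card {a : V // F.connectedComponentMk a = c}) :
    Nat.card F.ConnectedComponent ≤ pdNum G ∧
    ((∀ c : F.ConnectedComponent,
        Nat.card {a : V // F.connectedComponentMk a = c} = 6) →
      6 * pdNum G = Fintype.card V) := by
  have hlow := card_connectedComponent_le_pdNum hclaw hcubic hle h2reg hdiam hbig
  refine ⟨hlow, fun h6 => ?_⟩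
  rw [card_eq_of_card_supp_eq h6,
    le_antisymm (pdNum_le_card_connectedComponent hclaw hcubic hle h2reg hdiam h6) hlow]

end PaperPD
end
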